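/- arXiv:1605.08108 — 10 statements merged into one kernel-verified Lean document; each statement's English description precedes it below -/
import Mathlib

section
/- For any x, y ∈ C, F(prox(x)) ≤ F(y) + ⟨L·(prox(x) − x), y − x⟩ − (L/2)·‖x − prox(x)‖₂². -/
/-!
Three inequalities add up. The descent lemma bounds `f (prox x)` by the quadratic model of `f`
at `x`; convexity of `f` bounds the linear part of that model at `y` by `f y`; and the prox
objective `h + ⟪f' x, · - x⟫ + L/2 ‖· - x‖²` is `L`-strongly convex and minimised over `C` at
`prox x`, so its value at `y` exceeds the minimum by at least `L/2 ‖prox x - y‖²`. Expanding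
`‖prox x - y‖²` around `x` produces the inner-product term.
-/

open scoped RealInnerProductSpace

open Set AffineMap

section

variable {E : Type*} [NormedAddCommGroup E] [InnerProductSpace ℝ E]

theorem HasGradientAt.hasDerivAt_comp_lineMap [CompleteSpace E] {f : E → ℝ} {g a b : E} {t : ℝ}
    (hf : HasGradientAt f g (lineMap a b t)) :
    HasDerivAt (fun s : ℝ ↦ f (lineMap a b s)) ⟪g, b - a⟫ t := by
  simpa [Function.comp_def] using hf.hasFDerivAt.comp_hasDerivAt t hasDerivAt_lineMap

theorem ConvexOn.add_inner_sub_le_of_hasGradientAt [CompleteSpace E] {s : Set E} {f : E → ℝ}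
    {g a b : E} (hf : ConvexOn ℝ s f) (ha : a ∈ s) (hb : b ∈ s) (hfa : HasGradientAt f g a) :
    f a + ⟪g, b - a⟫ ≤ f b := by
  have hline : ConvexOn ℝ (Icc 0 1) fun t : ℝ ↦ f (lineMap a b t) :=
    (hf.comp_affineMap _).subset (hf.1.mapsTo_lineMap ha hb) (convex_Icc 0 1)
  have hderiv : HasDerivAt (fun t : ℝ ↦ f (lineMap a b t)) ⟪g, b - a⟫ 0 :=
    HasGradientAt.hasDerivAt_comp_lineMap (by simpa using hfa)
  have := hline.le_slope_of_hasDerivAt (left_mem_Icc.2 zero_le_one) (right_mem_Icc.2 zero_le_one)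
    zero_lt_one hderiv
  simp only [slope_def_field, lineMap_apply_one, lineMap_apply_zero, sub_zero, div_one] at this
  linarith

theorem Convex.le_add_inner_add_norm_sq_of_lipschitz_gradient [CompleteSpace E] {s : Set E}
    (hs : Convex ℝ s) {f : E → ℝ} {f' : E → E} {L : ℝ}
    (hf : ∀ x ∈ s, HasGradientAt f (f' x) x)
    (hL : ∀ x ∈ s, ∀ y ∈ s, ‖f' x - f' y‖ ≤ L * ‖x - y‖) {a b : E} (ha : a ∈ s) (hb : b ∈ s) :
    f b ≤ f a + ⟪f' a, b - a⟫ + L / 2 * ‖b - a‖ ^ 2 := by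
  -- `f` minus its quadratic model along the segment; the Lipschitz bound makes it antitone
  set φ : ℝ → ℝ := fun t ↦ f (lineMap a b t) - t * ⟪f' a, b - a⟫ - L / 2 * t ^ 2 * ‖b - a‖ ^ 2
  have hφ : ∀ t ∈ Icc (0 : ℝ) 1,
      HasDerivAt φ (⟪f' (lineMap a b t) - f' a, b - a⟫ - L * t * ‖b - a‖ ^ 2) t := by
    intro t ht
    have := (((hf _ (hs.lineMap_mem ha hb ht)).hasDerivAt_comp_lineMap).sub
      ((hasDerivAt_id t).mul_const ⟪f' a, b - a⟫)).sub
      (((hasDerivAt_pow 2 t).const_mul (L / 2)).mul_const (‖b - a‖ ^ 2))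
    refine this.congr_deriv ?_
    rw [inner_sub_left]
    push_cast
    ring
  have hφ'_nonpos : ∀ t ∈ Icc (0 : ℝ) 1,
      ⟪f' (lineMap a b t) - f' a, b - a⟫ - L * t * ‖b - a‖ ^ 2 ≤ 0 := by
    intro t ht
    have hdist : ‖lineMap a b t - a‖ = t * ‖b - a‖ := by
      rw [← dist_eq_norm, dist_lineMap_left, Real.norm_of_nonneg ht.1, dist_comm, dist_eq_norm]
    rw [sub_nonpos]
    calc ⟪f' (lineMap a b t) - f' a, b - a⟫
        ≤ ‖f' (lineMap a b t) - f' a‖ * ‖b - a‖ := real_inner_le_norm _ _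
      _ ≤ L * ‖lineMap a b t - a‖ * ‖b - a‖ := by
          gcongr; exact hL _ (hs.lineMap_mem ha hb ht) _ ha
      _ = L * t * ‖b - a‖ ^ 2 := by rw [hdist]; ring
  have hanti : AntitoneOn φ (Icc 0 1) :=
    antitoneOn_of_hasDerivWithinAt_nonpos (convex_Icc 0 1)
      (fun t ht ↦ (hφ t ht).continuousAt.continuousWithinAt)
      (fun t ht ↦ (hφ t (interior_subset ht)).hasDerivWithinAt)
      (fun t ht ↦ hφ'_nonpos t (interior_subset ht))
  have := hanti (left_mem_Icc.2 zero_le_one) (right_mem_Icc.2 zero_le_one) zero_le_one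
  simp only [φ, lineMap_apply_one, lineMap_apply_zero] at this
  linarith

theorem UniformConvexOn.add_le_of_isMinOn {s : Set E} {φ : ℝ → ℝ} {f : E → ℝ} {p y : E}
    (hf : UniformConvexOn s φ f) (hp : p ∈ s) (hmin : IsMinOn f s p) (hy : y ∈ s) :
    f p + φ ‖p - y‖ ≤ f y := by
  -- compare `p` with `(1 - t) • p + t • y` and let `t → 0⁺`
  have hle : ∀ t ∈ Ioc (0 : ℝ) 1, f p + (1 - t) * φ ‖p - y‖ ≤ f y := by
    intro t ⟨ht0, ht1⟩
    have hmid := hf.2 hp hy (sub_nonneg.2 ht1) ht0.le (sub_add_cancel 1 t)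
    have := (hmin (hf.1 hp hy (sub_nonneg.2 ht1) ht0.le (sub_add_cancel 1 t))).trans hmid
    simp only [smul_eq_mul] at this
    nlinarith
  have hlim : Filter.Tendsto (fun t : ℝ ↦ f p + (1 - t) * φ ‖p - y‖) (nhdsWithin 0 (Ioi 0))
      (nhds (f p + φ ‖p - y‖)) := by
    refine tendsto_nhdsWithin_of_tendsto_nhds ?_
    exact Continuous.tendsto' (by fun_prop) 0 _ (by simp)
  refine le_of_tendsto hlim ?_
  filter_upwards [Ioc_mem_nhdsGT zero_lt_one] with t ht using hle t ht

theorem ConvexOn.strongConvexOn_add_norm_sub_sq {s : Set E} {ψ : E → ℝ} (hψ : ConvexOn ℝ s ψ)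
    (m : ℝ) (x : E) : StrongConvexOn s m fun w ↦ ψ w + m / 2 * ‖w - x‖ ^ 2 := by
  rw [strongConvexOn_iff_convex]
  have hlin : ConvexOn ℝ s fun w ↦ -m * ⟪x, w⟫ := ((-m) • innerₗ E x).convexOn hψ.1
  refine ((hψ.add hlin).add_const (m / 2 * ‖x‖ ^ 2)).congr fun w _ ↦ ?_
  simp only [Pi.add_apply, norm_sub_sq_real, real_inner_comm w x]
  ring

end

theorem flag_gradient_mapping_general
    {d : ℕ} (C : Set (EuclideanSpace ℝ (Fin d)))
    (hCconv : Convex ℝ C)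
    (L : ℝ)
    (f h : EuclideanSpace ℝ (Fin d) → ℝ)
    (f' : EuclideanSpace ℝ (Fin d) → EuclideanSpace ℝ (Fin d))
    (hfconv : ConvexOn ℝ Set.univ f) (hhconv : ConvexOn ℝ Set.univ h)
    (hfdiff : ∀ x, HasGradientAt f (f' x) x)
    (hflip : ∀ x ∈ C, ∀ y ∈ C, ‖f' x - f' y‖ ≤ L * ‖x - y‖)
    (prox : EuclideanSpace ℝ (Fin d) → EuclideanSpace ℝ (Fin d))
    (hprox : ∀ x ∈ C, prox x ∈ C ∧ ∀ w ∈ C,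
      h (prox x) + ⟪f' x, prox x - x⟫ + L / 2 * ‖prox x - x‖ ^ 2
        ≤ h w + ⟪f' x, w - x⟫ + L / 2 * ‖w - x‖ ^ 2)
    (F : EuclideanSpace ℝ (Fin d) → ℝ) (hF : ∀ v, F v = f v + h v)
    (x y : EuclideanSpace ℝ (Fin d)) (hx : x ∈ C) (hy : y ∈ C) :
    F (prox x) ≤ F y + ⟪L • (prox x - x), y - x⟫ - L / 2 * ‖x - prox x‖ ^ 2 := by
  obtain ⟨hpC, hmin⟩ := hprox x hx
  set p := prox x
  have hlin : ConvexOn ℝ C fun w ↦ ⟪f' x, w - x⟫ :=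
    (((innerₗ _ (f' x)).convexOn hCconv).add_const (-⟪f' x, x⟫)).congr fun w _ ↦ by
      simp [sub_eq_add_neg, inner_add_right]
  have hmodel : StrongConvexOn C L fun w ↦ h w + ⟪f' x, w - x⟫ + L / 2 * ‖w - x‖ ^ 2 :=
    ((hhconv.subset (subset_univ C) hCconv).add hlin).strongConvexOn_add_norm_sub_sq L x
  have hthree := hmodel.add_le_of_isMinOn hpC hmin hy
  have hdesc := hCconv.le_add_inner_add_norm_sq_of_lipschitz_gradient (fun z _ ↦ hfdiff z)
    hflip hx hpC
  have hgrad := hfconv.add_inner_sub_le_of_hasGradientAt (mem_univ x) (mem_univ y) (hfdiff x)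
  have hsq : ‖p - y‖ ^ 2 = ‖y - x‖ ^ 2 - 2 * ⟪p - x, y - x⟫ + ‖p - x‖ ^ 2 := by
    rw [← norm_sub_rev, show y - p = (y - x) - (p - x) by abel, norm_sub_sq_real,
      real_inner_comm]
  rw [hF, hF, real_inner_smul_left, norm_sub_rev x p]
  linear_combination hdesc + hthree + hgrad - L / 2 * hsq

/-- **Gradient Mapping Lemma** (Lemma 1 of FLAG).
For any `x, y ∈ C`:
`F(prox x) ≤ F y + ⟨L•(prox x − x), y − x⟩ − (L/2)‖x − prox x‖₂²`. -/
theorem flag_gradient_mapping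
    {d : ℕ} (C : Set (EuclideanSpace ℝ (Fin d)))
    (hCconv : Convex ℝ C) (hCclosed : IsClosed C)
    (L : ℝ) (hL : 0 < L)
    (f h : EuclideanSpace ℝ (Fin d) → ℝ)
    (f' : EuclideanSpace ℝ (Fin d) → EuclideanSpace ℝ (Fin d))
    (hfconv : ConvexOn ℝ Set.univ f) (hhconv : ConvexOn ℝ Set.univ h)
    (hfdiff : ∀ x, HasGradientAt f (f' x) x)
    (hflip : ∀ x ∈ C, ∀ y ∈ C, ‖f' x - f' y‖ ≤ L * ‖x - y‖)
    (prox : EuclideanSpace ℝ (Fin d) → EuclideanSpace ℝ (Fin d))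
    (hprox : ∀ x ∈ C, prox x ∈ C ∧ ∀ w ∈ C,
      h (prox x) + ⟪f' x, prox x - x⟫ + L / 2 * ‖prox x - x‖ ^ 2
        ≤ h w + ⟪f' x, w - x⟫ + L / 2 * ‖w - x‖ ^ 2)
    (F : EuclideanSpace ℝ (Fin d) → ℝ) (hF : ∀ v, F v = f v + h v)
    (x y : EuclideanSpace ℝ (Fin d)) (hx : x ∈ C) (hy : y ∈ C) :
    F (prox x) ≤ F y + ⟪L • (prox x - x), y - x⟫ - L / 2 * ‖x - prox x‖ ^ 2 :=
  flag_gradient_mapping_general C hCconv L f h f' hfconv hhconv hfdiff hflip prox hprox F hF x y hx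
    hy
end

section
/- For any x ∈ C, F(prox(x)) ≤ F(x) − (L/2)·‖x − prox(x)‖₂². -/
open scoped RealInnerProductSpace
open Set Filter Topology

/-!
Write `p = prox x`. Along the segment from `x` to `p`, the Lipschitz bound on `∇f` gives the
descent lemma `f p ≤ f x + ⟪∇f x, p - x⟫ + (L/2)‖p - x‖²`. On the other hand `p` minimizes
`φ + (L/2)‖· - x‖²` over `C`, where `φ = h + ⟪∇f x, · - x⟫` is convex; comparing `p` with the points
`(1 - t) p + t x` and letting `t → 0` shows that the quadratic term counts twice:
`φ p + L‖p - x‖² ≤ φ x = h x`. Adding the two inequalities gives the claim.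
-/

section

variable {E : Type*} [NormedAddCommGroup E] [InnerProductSpace ℝ E]

theorem convexOn_inner_sub (g x : E) {s : Set E} (hs : Convex ℝ s) :
    ConvexOn ℝ s (fun w => ⟪g, w - x⟫) := by
  refine ⟨hs, fun u _ w _ a b _ _ hab => le_of_eq ?_⟩
  simp only [smul_eq_mul, ← inner_smul_right, ← inner_add_right]
  congr 1
  linear_combination (norm := module) hab • x

theorem ConvexOn.add_mul_sq_norm_sub_le_of_isMinOn {φ : E → ℝ} {s : Set E}
    (hφ : ConvexOn ℝ s φ) {x p : E} (hx : x ∈ s) (hp : p ∈ s) (L : ℝ)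
    (hmin : IsMinOn (fun w => φ w + L / 2 * ‖w - x‖ ^ 2) s p) :
    φ p + L * ‖p - x‖ ^ 2 ≤ φ x := by
  set c := L / 2 * ‖p - x‖ ^ 2
  have key : ∀ t ∈ Ioc (0 : ℝ) 1, φ p + (2 - t) * c ≤ φ x := by
    rintro t ⟨ht0, ht1⟩
    have hw : (1 - t) • p + t • x ∈ s := hφ.1 hp hx (by linarith) ht0.le (by ring)
    have hmin_w : φ p + c ≤ φ ((1 - t) • p + t • x) + (1 - t) ^ 2 * c := by
      have hwx : (1 - t) • p + t • x - x = (1 - t) • (p - x) := by module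
      have := hmin hw
      simp only [mem_ofPred_eq, hwx, norm_smul, mul_pow, Real.norm_eq_abs, sq_abs] at this
      linear_combination this
    have hconv := hφ.2 hp hx (by linarith : 0 ≤ 1 - t) ht0.le (sub_add_cancel 1 t)
    simp only [smul_eq_mul] at hconv
    refine le_of_mul_le_mul_left ?_ ht0
    linear_combination hmin_w + hconv
  have hlim : Tendsto (fun t : ℝ => φ p + (2 - t) * c) (𝓝[>] 0) (𝓝 (φ p + (2 - 0) * c)) :=
    (Continuous.tendsto (by fun_prop) 0).mono_left nhdsWithin_le_nhds
  have := le_of_tendsto hlim (eventually_of_mem (Ioc_mem_nhdsGT one_pos) key)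
  linear_combination this

variable [CompleteSpace E]

theorem HasGradientAt.hasDerivAt_add_smul {f : E → ℝ} {g x v : E} {t : ℝ}
    (hf : HasGradientAt f g (x + t • v)) :
    HasDerivAt (fun t : ℝ => f (x + t • v)) ⟪g, v⟫ t := by
  have hline : HasDerivAt (fun t : ℝ => x + t • v) v t := by
    simpa using ((hasDerivAt_id t).smul_const v).const_add x
  simpa [InnerProductSpace.toDual_apply_apply, Function.comp_def] using
    hf.hasFDerivAt.comp_hasDerivAt t hline

theorem Convex.le_add_inner_add_of_lipschitz_gradient {f : E → ℝ} {f' : E → E} {s : Set E}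
    (hs : Convex ℝ s) {L : ℝ} (hf : ∀ x ∈ s, HasGradientAt f (f' x) x)
    (hL : ∀ x ∈ s, ∀ y ∈ s, ‖f' x - f' y‖ ≤ L * ‖x - y‖) {x y : E} (hx : x ∈ s) (hy : y ∈ s) :
    f y ≤ f x + ⟪f' x, y - x⟫ + L / 2 * ‖y - x‖ ^ 2 := by
  set v := y - x
  set a := ⟪f' x, v⟫
  set c := L / 2 * ‖v‖ ^ 2
  have hseg : ∀ t ∈ Icc (0 : ℝ) 1, x + t • v ∈ s := fun t ht => by
    simpa using hs.add_smul_sub_mem hx hy ht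
  have hderiv : ∀ t ∈ Icc (0 : ℝ) 1, HasDerivAt (fun t : ℝ => f (x + t • v) - t * a - t ^ 2 * c)
      (⟪f' (x + t • v) - f' x, v⟫ - 2 * t * c) t := fun t ht => by
    refine ((((hf _ (hseg t ht)).hasDerivAt_add_smul).sub ((hasDerivAt_id' t).mul_const a)).sub
      ((hasDerivAt_pow 2 t).mul_const c)).congr_deriv ?_
    simp only [inner_sub_left, a]
    ring
  have hanti : AntitoneOn (fun t : ℝ => f (x + t • v) - t * a - t ^ 2 * c) (Icc 0 1) := by
    refine antitoneOn_of_deriv_nonpos (convex_Icc 0 1)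
      (fun t ht => (hderiv t ht).continuousAt.continuousWithinAt)
      (fun t ht => (hderiv t (interior_subset ht)).differentiableAt.differentiableWithinAt)
      fun t ht => ?_
    rw [interior_Icc] at ht
    rw [(hderiv t (Ioo_subset_Icc_self ht)).deriv, sub_nonpos]
    calc ⟪f' (x + t • v) - f' x, v⟫ ≤ ‖f' (x + t • v) - f' x‖ * ‖v‖ := real_inner_le_norm _ _
      _ ≤ L * ‖x + t • v - x‖ * ‖v‖ := by
        gcongr
        exact hL _ (hseg t (Ioo_subset_Icc_self ht)) _ hx
      _ = 2 * t * c := by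
        rw [add_sub_cancel_left, norm_smul, Real.norm_of_nonneg ht.1.le]
        ring
  have := hanti (left_mem_Icc.2 zero_le_one) (right_mem_Icc.2 zero_le_one) zero_le_one
  simp only [zero_smul, add_zero, one_smul, zero_mul, sub_zero, one_pow, one_mul, v,
    add_sub_cancel] at this
  linarith

end

theorem flag_prox_descent_general
    {d : ℕ} (C : Set (EuclideanSpace ℝ (Fin d)))
    (hCconv : Convex ℝ C)
    (L : ℝ)
    (f h : EuclideanSpace ℝ (Fin d) → ℝ)
    (f' : EuclideanSpace ℝ (Fin d) → EuclideanSpace ℝ (Fin d))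
    (hhconv : ConvexOn ℝ Set.univ h)
    (hfdiff : ∀ x, HasGradientAt f (f' x) x)
    (hflip : ∀ x ∈ C, ∀ y ∈ C, ‖f' x - f' y‖ ≤ L * ‖x - y‖)
    (prox : EuclideanSpace ℝ (Fin d) → EuclideanSpace ℝ (Fin d))
    (hprox : ∀ x ∈ C, prox x ∈ C ∧ ∀ w ∈ C,
      h (prox x) + ⟪f' x, prox x - x⟫ + L / 2 * ‖prox x - x‖ ^ 2
        ≤ h w + ⟪f' x, w - x⟫ + L / 2 * ‖w - x‖ ^ 2)
    (F : EuclideanSpace ℝ (Fin d) → ℝ) (hF : ∀ v, F v = f v + h v)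
    (x : EuclideanSpace ℝ (Fin d)) (hx : x ∈ C) :
    F (prox x) ≤ F x - L / 2 * ‖x - prox x‖ ^ 2 := by
  obtain ⟨hpC, hmin⟩ := hprox x hx
  have hdescent : f (prox x) ≤ f x + ⟪f' x, prox x - x⟫ + L / 2 * ‖prox x - x‖ ^ 2 :=
    hCconv.le_add_inner_add_of_lipschitz_gradient (fun y _ => hfdiff y) hflip hx hpC
  have hstrong : h (prox x) + ⟪f' x, prox x - x⟫ + L * ‖prox x - x‖ ^ 2 ≤ h x := by
    have hconv := (hhconv.subset (subset_univ C) hCconv).add (convexOn_inner_sub (f' x) x hCconv)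
    simpa only [Pi.add_apply, sub_self, inner_zero_right, add_zero] using
      hconv.add_mul_sq_norm_sub_le_of_isMinOn hx hpC L (isMinOn_iff.2 hmin)
  rw [hF, hF, norm_sub_rev]
  linarith

/-- Descent property of the prox step (special case of the Gradient Mapping Lemma):
for any `x ∈ C`, `F(prox x) ≤ F x − (L/2)‖x − prox x‖₂²`. -/
theorem flag_prox_descent
    {d : ℕ} (C : Set (EuclideanSpace ℝ (Fin d)))
    (hCconv : Convex ℝ C) (hCclosed : IsClosed C)
    (L : ℝ) (hL : 0 < L)
    (f h : EuclideanSpace ℝ (Fin d) → ℝ)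
    (f' : EuclideanSpace ℝ (Fin d) → EuclideanSpace ℝ (Fin d))
    (hfconv : ConvexOn ℝ Set.univ f) (hhconv : ConvexOn ℝ Set.univ h)
    (hfdiff : ∀ x, HasGradientAt f (f' x) x)
    (hflip : ∀ x ∈ C, ∀ y ∈ C, ‖f' x - f' y‖ ≤ L * ‖x - y‖)
    (prox : EuclideanSpace ℝ (Fin d) → EuclideanSpace ℝ (Fin d))
    (hprox : ∀ x ∈ C, prox x ∈ C ∧ ∀ w ∈ C,
      h (prox x) + ⟪f' x, prox x - x⟫ + L / 2 * ‖prox x - x‖ ^ 2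
        ≤ h w + ⟪f' x, w - x⟫ + L / 2 * ‖w - x‖ ^ 2)
    (F : EuclideanSpace ℝ (Fin d) → ℝ) (hF : ∀ v, F v = f v + h v)
    (x : EuclideanSpace ℝ (Fin d)) (hx : x ∈ C) :
    F (prox x) ≤ F x - L / 2 * ‖x - prox x‖ ^ 2 :=
  flag_prox_descent_general C hCconv L f h f' hhconv hfdiff hflip prox hprox F hF x hx
end

section
/- The prox operator is 2-Lipschitz continuous: for any x, y ∈ C, ‖prox(x) − prox(y)‖₂ ≤ 2‖x − y‖₂. -/
/-!
The objective `φ w = h w + ⟪g, w - x⟫ + L / 2 * ‖w - x‖ ^ 2` is `L`-strongly convex, so its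
minimizer `u` over the convex set `C` has quadratic growth: `φ u + L / 2 * ‖w - u‖ ^ 2 ≤ φ w` on `C`.
Writing this for `u = prox x` tested at `v = prox y` and vice versa and adding, the `h`-terms cancel
and what remains is `L * ‖u - v‖ ^ 2 ≤ ⟪∇f x - ∇f y, v - u⟫ + L * ⟪u - v, x - y⟫`. Cauchy–Schwarz and
the `L`-Lipschitz gradient then give `L * ‖u - v‖ ≤ 2 * L * ‖x - y‖`.
-/

open scoped RealInnerProductSpace
open Filter Topology

theorem le_of_forall_one_sub_mul_le {a b : ℝ} (h : ∀ t ∈ Set.Ioo (0 : ℝ) 1, (1 - t) * a ≤ b) :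
    a ≤ b := by
  have hlim : Tendsto (fun t : ℝ => (1 - t) * a) (𝓝[>] 0) (𝓝 a) := by
    have : Continuous fun t : ℝ => (1 - t) * a := by fun_prop
    simpa using (this.tendsto 0).mono_left nhdsWithin_le_nhds
  exact le_of_tendsto hlim (eventually_of_mem (Ioo_mem_nhdsGT one_pos) h)

theorem StrongConvexOn.add_sq_le_of_isMinOn {E : Type*} [NormedAddCommGroup E] [NormedSpace ℝ E]
    {s : Set E} {m : ℝ} {φ : E → ℝ} {u w : E} (hφ : StrongConvexOn s m φ)
    (hmin : IsMinOn φ s u) (hu : u ∈ s) (hw : w ∈ s) :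
    φ u + m / 2 * ‖w - u‖ ^ 2 ≤ φ w := by
  suffices m / 2 * ‖u - w‖ ^ 2 ≤ φ w - φ u by rw [norm_sub_rev]; linarith
  refine le_of_forall_one_sub_mul_le fun t ⟨ht0, ht1⟩ => ?_
  have hle : φ u ≤ φ ((1 - t) • u + t • w) :=
    hmin (hφ.1 hu hw (sub_nonneg.2 ht1.le) ht0.le (sub_add_cancel 1 t))
  have hconv := hφ.2 hu hw (sub_nonneg.2 ht1.le) ht0.le (sub_add_cancel 1 t)
  simp only [smul_eq_mul] at hconv
  have key : t * ((1 - t) * (m / 2 * ‖u - w‖ ^ 2)) ≤ t * (φ w - φ u) := by linarith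
  exact le_of_mul_le_mul_left key ht0

section Prox

variable {E : Type*} [NormedAddCommGroup E] [InnerProductSpace ℝ E]

noncomputable def proxObjective (h : E → ℝ) (L : ℝ) (g x w : E) : ℝ :=
  h w + ⟪g, w - x⟫ + L / 2 * ‖w - x‖ ^ 2

theorem strongConvexOn_proxObjective {s : Set E} {h : E → ℝ} (hh : ConvexOn ℝ s h) (L : ℝ)
    (g x : E) : StrongConvexOn s L (proxObjective h L g x) := by
  have hlin : ConvexOn ℝ s fun w => ⟪g - L • x, w⟫ :=
    (innerSL ℝ (g - L • x)).toLinearMap.convexOn hh.1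
  rw [strongConvexOn_iff_convex]
  refine ((hh.add hlin).add_const (L / 2 * ‖x‖ ^ 2 - ⟪g, x⟫)).congr fun w _ => ?_
  simp only [proxObjective, Pi.add_apply, norm_sub_sq_real, inner_sub_left, inner_sub_right,
    real_inner_smul_left, real_inner_comm x w]
  ring

variable {s : Set E} {h : E → ℝ} {L : ℝ} {g g' x y u v : E}

theorem sq_norm_sub_le_of_isMinOn_proxObjective (hh : ConvexOn ℝ s h)
    (hu : u ∈ s) (hv : v ∈ s) (hux : IsMinOn (proxObjective h L g x) s u)
    (hvy : IsMinOn (proxObjective h L g' y) s v) :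
    L * ‖u - v‖ ^ 2 ≤ ⟪g - g', v - u⟫ + L * ⟪u - v, x - y⟫ := by
  have H₁ := (strongConvexOn_proxObjective hh L g x).add_sq_le_of_isMinOn hux hu hv
  have H₂ := (strongConvexOn_proxObjective hh L g' y).add_sq_le_of_isMinOn hvy hv hu
  rw [norm_sub_rev] at H₁
  simp only [proxObjective, norm_sub_sq_real, inner_sub_left, inner_sub_right,
    real_inner_comm x u, real_inner_comm x v, real_inner_comm y u, real_inner_comm y v] at H₁ H₂ ⊢
  linarith

theorem norm_sub_le_of_isMinOn_proxObjective (hh : ConvexOn ℝ s h) (hL : 0 < L)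
    (hu : u ∈ s) (hv : v ∈ s) (hux : IsMinOn (proxObjective h L g x) s u)
    (hvy : IsMinOn (proxObjective h L g' y) s v) :
    L * ‖u - v‖ ≤ ‖g - g'‖ + L * ‖x - y‖ := by
  rcases (norm_nonneg (u - v)).eq_or_lt with huv | huv
  · rw [← huv, mul_zero]; positivity
  have key : L * ‖u - v‖ ^ 2 ≤ (‖g - g'‖ + L * ‖x - y‖) * ‖u - v‖ :=
    calc L * ‖u - v‖ ^ 2 ≤ ⟪g - g', v - u⟫ + L * ⟪u - v, x - y⟫ :=
          sq_norm_sub_le_of_isMinOn_proxObjective hh hu hv hux hvy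
      _ ≤ ‖g - g'‖ * ‖v - u‖ + L * (‖u - v‖ * ‖x - y‖) := by
          gcongr
          · exact real_inner_le_norm _ _
          · exact real_inner_le_norm _ _
      _ = (‖g - g'‖ + L * ‖x - y‖) * ‖u - v‖ := by rw [norm_sub_rev v u]; ring
  rw [sq, ← mul_assoc] at key
  exact le_of_mul_le_mul_right key huv

end Prox

theorem flag_prox_two_lipschitz_general
    {d : ℕ} (C : Set (EuclideanSpace ℝ (Fin d)))
    (hCconv : Convex ℝ C)
    (L : ℝ) (hL : 0 < L)
    (h : EuclideanSpace ℝ (Fin d) → ℝ)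
    (f' : EuclideanSpace ℝ (Fin d) → EuclideanSpace ℝ (Fin d))
    (hhconv : ConvexOn ℝ Set.univ h)
    (hflip : ∀ x ∈ C, ∀ y ∈ C, ‖f' x - f' y‖ ≤ L * ‖x - y‖)
    (prox : EuclideanSpace ℝ (Fin d) → EuclideanSpace ℝ (Fin d))
    (hprox : ∀ x ∈ C, prox x ∈ C ∧ ∀ w ∈ C,
      h (prox x) + ⟪f' x, prox x - x⟫ + L / 2 * ‖prox x - x‖ ^ 2
        ≤ h w + ⟪f' x, w - x⟫ + L / 2 * ‖w - x‖ ^ 2)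
    (x y : EuclideanSpace ℝ (Fin d)) (hx : x ∈ C) (hy : y ∈ C) :
    ‖prox x - prox y‖ ≤ 2 * ‖x - y‖ := by
  have hxmin : IsMinOn (proxObjective h L (f' x) x) C (prox x) := (hprox x hx).2
  have hymin : IsMinOn (proxObjective h L (f' y) y) C (prox y) := (hprox y hy).2
  have hbound := norm_sub_le_of_isMinOn_proxObjective (hhconv.subset (Set.subset_univ C) hCconv)
    hL (hprox x hx).1 (hprox y hy).1 hxmin hymin
  have hgrad := hflip x hx y hy
  have : L * ‖prox x - prox y‖ ≤ L * (2 * ‖x - y‖) := by linarith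
  exact le_of_mul_le_mul_left this hL

/-- **Prox Operator Continuity** (Lemma 2): the prox operator is 2-Lipschitz on `C`. -/
theorem flag_prox_two_lipschitz
    {d : ℕ} (C : Set (EuclideanSpace ℝ (Fin d)))
    (hCconv : Convex ℝ C) (hCclosed : IsClosed C)
    (L : ℝ) (hL : 0 < L)
    (f h : EuclideanSpace ℝ (Fin d) → ℝ)
    (f' : EuclideanSpace ℝ (Fin d) → EuclideanSpace ℝ (Fin d))
    (hfconv : ConvexOn ℝ Set.univ f) (hhconv : ConvexOn ℝ Set.univ h)
    (hfdiff : ∀ x, HasGradientAt f (f' x) x)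
    (hflip : ∀ x ∈ C, ∀ y ∈ C, ‖f' x - f' y‖ ≤ L * ‖x - y‖)
    (prox : EuclideanSpace ℝ (Fin d) → EuclideanSpace ℝ (Fin d))
    (hprox : ∀ x ∈ C, prox x ∈ C ∧ ∀ w ∈ C,
      h (prox x) + ⟪f' x, prox x - x⟫ + L / 2 * ‖prox x - x‖ ^ 2
        ≤ h w + ⟪f' x, w - x⟫ + L / 2 * ‖w - x‖ ^ 2)
    (x y : EuclideanSpace ℝ (Fin d)) (hx : x ∈ C) (hy : y ∈ C) :
    ‖prox x - prox y‖ ≤ 2 * ‖x - y‖ :=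
  flag_prox_two_lipschitz_general C hCconv L hL h f' hhconv hflip prox hprox x y hx hy
end

section
/- Let y, z ∈ C, let ε > 0, and let t, t* ∈ [0,1] with |t − t*| ≤ ε. Set w := t*·y + (1−t*)·z and x := t·y + (1−t)·z. If ⟨prox(w) − w, y − z⟩ = 0, then |⟨prox(x) − x, y − z⟩| ≤ 3ε·‖y − z‖₂². -/
open scoped RealInnerProductSpace Topology

open Filter Set

/-!
Completing the square, `prox x` minimizes `h + (L/2)‖· - a‖²` over `C`, where
`a = x - L⁻¹ ∇f(x)` is the gradient step. Its first-order optimality condition makes it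
`1`-Lipschitz in `a`, and the gradient step is `2`-Lipschitz on `C`, so
`‖prox x - prox w‖ ≤ 2‖x - w‖ = 2|t - t*|‖y - z‖`. Since `⟪prox w - w, y - z⟫ = 0`, the quantity
`|⟪prox x - x, y - z⟫|` is at most `(‖prox x - prox w‖ + ‖x - w‖)‖y - z‖ ≤ 3ε‖y - z‖²`.
-/

lemma nonneg_of_forall_Ioc_nonneg_add_mul {K c : ℝ} (h : ∀ r ∈ Ioc (0 : ℝ) 1, 0 ≤ K + r * c) :
    0 ≤ K := by
  have hlim : Tendsto (fun r : ℝ => K + r * c) (𝓝[>] 0) (𝓝 K) := by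
    have hcont : Continuous fun r : ℝ => K + r * c := by fun_prop
    simpa using (hcont.tendsto 0).mono_left nhdsWithin_le_nhds
  refine ge_of_tendsto hlim ?_
  filter_upwards [Ioo_mem_nhdsGT one_pos] with r hr using h r ⟨hr.1, hr.2.le⟩

variable {E : Type*} [NormedAddCommGroup E] [InnerProductSpace ℝ E]

lemma inner_add_half_mul_norm_sq_eq {L : ℝ} (hL : L ≠ 0) (g v q : E) :
    ⟪g, v - q⟫ + L / 2 * ‖v - q‖ ^ 2
      = L / 2 * ‖v - (q - L⁻¹ • g)‖ ^ 2 - ‖g‖ ^ 2 / (2 * L) := by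
  rw [show v - (q - L⁻¹ • g) = (v - q) + L⁻¹ • g by abel, norm_add_sq_real,
    real_inner_smul_right, norm_smul, Real.norm_eq_abs, mul_pow, sq_abs, real_inner_comm]
  field_simp
  ring

lemma inner_sub_le_of_isMinOn_add_sq {s : Set E} (hs : Convex ℝ s) {h : E → ℝ}
    (hh : ConvexOn ℝ s h) {L : ℝ} {a p : E} (hp : p ∈ s)
    (hmin : IsMinOn (fun u => h u + L / 2 * ‖u - a‖ ^ 2) s p) {u : E} (hu : u ∈ s) :
    L * ⟪a - p, u - p⟫ ≤ h u - h p := by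
  suffices 0 ≤ h u - h p - L * ⟪a - p, u - p⟫ by linarith
  refine nonneg_of_forall_Ioc_nonneg_add_mul (c := L / 2 * ‖u - p‖ ^ 2) fun r hr => ?_
  have hmem : (1 - r) • p + r • u ∈ s := hs hp hu (by linarith [hr.2]) hr.1.le (by ring)
  have hconv : h ((1 - r) • p + r • u) ≤ (1 - r) * h p + r * h u :=
    hh.2 hp hu (by linarith [hr.2]) hr.1.le (by ring)
  have hnorm : ‖(1 - r) • p + r • u - a‖ ^ 2
      = ‖p - a‖ ^ 2 - 2 * r * ⟪a - p, u - p⟫ + r ^ 2 * ‖u - p‖ ^ 2 := by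
    rw [show (1 - r) • p + r • u - a = (p - a) + r • (u - p) by module, norm_add_sq_real,
      real_inner_smul_right, norm_smul, Real.norm_eq_abs, mul_pow, sq_abs,
      show p - a = -(a - p) by abel, inner_neg_left, norm_neg]
    ring
  have hcomp : h p + L / 2 * ‖p - a‖ ^ 2
      ≤ h ((1 - r) • p + r • u) + L / 2 * ‖(1 - r) • p + r • u - a‖ ^ 2 := hmin hmem
  refine nonneg_of_mul_nonneg_right (a := r) ?_ hr.1
  linear_combination hcomp + hconv + L / 2 * hnorm

lemma norm_sub_le_of_isMinOn_add_sq {s : Set E} (hs : Convex ℝ s) {h : E → ℝ}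
    (hh : ConvexOn ℝ s h) {L : ℝ} (hL : 0 < L) {a₁ a₂ p₁ p₂ : E} (hp₁ : p₁ ∈ s) (hp₂ : p₂ ∈ s)
    (hmin₁ : IsMinOn (fun u => h u + L / 2 * ‖u - a₁‖ ^ 2) s p₁)
    (hmin₂ : IsMinOn (fun u => h u + L / 2 * ‖u - a₂‖ ^ 2) s p₂) :
    ‖p₁ - p₂‖ ≤ ‖a₁ - a₂‖ := by
  have h₁ := inner_sub_le_of_isMinOn_add_sq hs hh hp₁ hmin₁ hp₂
  have h₂ := inner_sub_le_of_isMinOn_add_sq hs hh hp₂ hmin₂ hp₁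
  have hsum : ⟪a₁ - p₁, p₂ - p₁⟫ + ⟪a₂ - p₂, p₁ - p₂⟫ = ‖p₁ - p₂‖ ^ 2 - ⟪a₁ - a₂, p₁ - p₂⟫ := by
    simp only [inner_sub_left, inner_sub_right, real_inner_self_eq_norm_sq, norm_sub_sq_real,
      real_inner_comm p₁ p₂]
    ring
  have hmono : ‖p₁ - p₂‖ ^ 2 ≤ ⟪a₁ - a₂, p₁ - p₂⟫ := by nlinarith
  have hCS := real_inner_le_norm (a₁ - a₂) (p₁ - p₂)
  nlinarith [norm_nonneg (p₁ - p₂), norm_nonneg (a₁ - a₂)]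

lemma norm_sub_inv_smul_sub_le_two_mul {L : ℝ} (hL : 0 < L) {x w gx gw : E}
    (hg : ‖gx - gw‖ ≤ L * ‖x - w‖) :
    ‖(x - L⁻¹ • gx) - (w - L⁻¹ • gw)‖ ≤ 2 * ‖x - w‖ :=
  calc ‖(x - L⁻¹ • gx) - (w - L⁻¹ • gw)‖ = ‖(x - w) - L⁻¹ • (gx - gw)‖ := by
        congr 1; module
    _ ≤ ‖x - w‖ + L⁻¹ * ‖gx - gw‖ := by
        grw [norm_sub_le, norm_smul, Real.norm_of_nonneg (inv_nonneg.2 hL.le)]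
    _ ≤ ‖x - w‖ + L⁻¹ * (L * ‖x - w‖) := by gcongr
    _ = 2 * ‖x - w‖ := by field_simp; ring

lemma isMinOn_add_sq_sub_inv_smul {s : Set E} {h : E → ℝ} {L : ℝ} (hL : L ≠ 0) {g q p : E}
    (hp : ∀ u ∈ s, h p + ⟪g, p - q⟫ + L / 2 * ‖p - q‖ ^ 2 ≤ h u + ⟪g, u - q⟫ + L / 2 * ‖u - q‖ ^ 2) :
    IsMinOn (fun u => h u + L / 2 * ‖u - (q - L⁻¹ • g)‖ ^ 2) s p := isMinOn_iff.2 fun u hu => by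
  have hpu := hp u hu
  rw [add_assoc, add_assoc, inner_add_half_mul_norm_sq_eq hL,
    inner_add_half_mul_norm_sq_eq hL] at hpu
  linarith

lemma norm_prox_sub_prox_le {C : Set E} (hC : Convex ℝ C) {h : E → ℝ} (hh : ConvexOn ℝ C h)
    {L : ℝ} (hL : 0 < L) {g : E → E} (hg : ∀ x ∈ C, ∀ y ∈ C, ‖g x - g y‖ ≤ L * ‖x - y‖)
    {prox : E → E}
    (hprox : ∀ x ∈ C, prox x ∈ C ∧ ∀ w ∈ C,
      h (prox x) + ⟪g x, prox x - x⟫ + L / 2 * ‖prox x - x‖ ^ 2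
        ≤ h w + ⟪g x, w - x⟫ + L / 2 * ‖w - x‖ ^ 2)
    {x w : E} (hx : x ∈ C) (hw : w ∈ C) :
    ‖prox x - prox w‖ ≤ 2 * ‖x - w‖ :=
  calc ‖prox x - prox w‖ ≤ ‖(x - L⁻¹ • g x) - (w - L⁻¹ • g w)‖ :=
        norm_sub_le_of_isMinOn_add_sq hC hh hL (hprox x hx).1 (hprox w hw).1
          (isMinOn_add_sq_sub_inv_smul hL.ne' (hprox x hx).2)
          (isMinOn_add_sq_sub_inv_smul hL.ne' (hprox w hw).2)
    _ ≤ 2 * ‖x - w‖ := norm_sub_inv_smul_sub_le_two_mul hL (hg x hx w hw)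

lemma abs_inner_sub_le_of_inner_sub_eq_zero {p x p' x' v : E} (h : ⟪p' - x', v⟫ = 0) :
    |⟪p - x, v⟫| ≤ (‖p - p'‖ + ‖x - x'‖) * ‖v‖ :=
  calc |⟪p - x, v⟫| = |⟪(p - p') - (x - x'), v⟫| := by
        rw [show p - x = (p - p') - (x - x') + (p' - x') by abel, inner_add_left, h, add_zero]
    _ ≤ ‖(p - p') - (x - x')‖ * ‖v‖ := abs_real_inner_le_norm _ _
    _ ≤ (‖p - p'‖ + ‖x - x'‖) * ‖v‖ := by gcongr; exact norm_sub_le _ _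

theorem flag_binary_search_accuracy_general
    {d : ℕ} (C : Set (EuclideanSpace ℝ (Fin d)))
    (hCconv : Convex ℝ C)
    (L : ℝ) (hL : 0 < L)
    (h : EuclideanSpace ℝ (Fin d) → ℝ)
    (f' : EuclideanSpace ℝ (Fin d) → EuclideanSpace ℝ (Fin d))
    (hhconv : ConvexOn ℝ Set.univ h)
    (hflip : ∀ x ∈ C, ∀ y ∈ C, ‖f' x - f' y‖ ≤ L * ‖x - y‖)
    (prox : EuclideanSpace ℝ (Fin d) → EuclideanSpace ℝ (Fin d))
    (hprox : ∀ x ∈ C, prox x ∈ C ∧ ∀ w ∈ C,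
      h (prox x) + ⟪f' x, prox x - x⟫ + L / 2 * ‖prox x - x‖ ^ 2
        ≤ h w + ⟪f' x, w - x⟫ + L / 2 * ‖w - x‖ ^ 2)
    (y z : EuclideanSpace ℝ (Fin d)) (hy : y ∈ C) (hz : z ∈ C)
    (ε : ℝ)
    (t tstar : ℝ) (ht : t ∈ Set.Icc (0 : ℝ) 1) (htstar : tstar ∈ Set.Icc (0 : ℝ) 1)
    (htclose : |t - tstar| ≤ ε)
    (w x : EuclideanSpace ℝ (Fin d))
    (hw : w = tstar • y + (1 - tstar) • z)
    (hx : x = t • y + (1 - t) • z)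
    (hroot : ⟪prox w - w, y - z⟫ = 0) :
    |⟪prox x - x, y - z⟫| ≤ 3 * ε * ‖y - z‖ ^ 2 := by
  have hxC : x ∈ C := hx ▸ hCconv hy hz ht.1 (by linarith [ht.2]) (by ring)
  have hwC : w ∈ C := hw ▸ hCconv hy hz htstar.1 (by linarith [htstar.2]) (by ring)
  have hxw : ‖x - w‖ ≤ ε * ‖y - z‖ := by
    rw [show x - w = (t - tstar) • (y - z) by rw [hx, hw]; module, norm_smul, Real.norm_eq_abs]
    gcongr
  have hprox_xw : ‖prox x - prox w‖ ≤ 2 * ‖x - w‖ :=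
    norm_prox_sub_prox_le hCconv (hhconv.subset (subset_univ C) hCconv) hL hflip hprox hxC hwC
  calc |⟪prox x - x, y - z⟫| ≤ (‖prox x - prox w‖ + ‖x - w‖) * ‖y - z‖ :=
        abs_inner_sub_le_of_inner_sub_eq_zero hroot
    _ ≤ 3 * (ε * ‖y - z‖) * ‖y - z‖ := by gcongr; linarith
    _ = 3 * ε * ‖y - z‖ ^ 2 := by ring

/-- **Binary Search Lemma** (Lemma 3, case (iii)): accuracy guarantee for the
output of the bisection routine. -/
theorem flag_binary_search_accuracy
    {d : ℕ} (C : Set (EuclideanSpace ℝ (Fin d)))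
    (hCconv : Convex ℝ C) (hCclosed : IsClosed C)
    (L : ℝ) (hL : 0 < L)
    (f h : EuclideanSpace ℝ (Fin d) → ℝ)
    (f' : EuclideanSpace ℝ (Fin d) → EuclideanSpace ℝ (Fin d))
    (hfconv : ConvexOn ℝ Set.univ f) (hhconv : ConvexOn ℝ Set.univ h)
    (hfdiff : ∀ x, HasGradientAt f (f' x) x)
    (hflip : ∀ x ∈ C, ∀ y ∈ C, ‖f' x - f' y‖ ≤ L * ‖x - y‖)
    (prox : EuclideanSpace ℝ (Fin d) → EuclideanSpace ℝ (Fin d))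
    (hprox : ∀ x ∈ C, prox x ∈ C ∧ ∀ w ∈ C,
      h (prox x) + ⟪f' x, prox x - x⟫ + L / 2 * ‖prox x - x‖ ^ 2
        ≤ h w + ⟪f' x, w - x⟫ + L / 2 * ‖w - x‖ ^ 2)
    (y z : EuclideanSpace ℝ (Fin d)) (hy : y ∈ C) (hz : z ∈ C)
    (ε : ℝ) (hε : 0 < ε)
    (t tstar : ℝ) (ht : t ∈ Set.Icc (0 : ℝ) 1) (htstar : tstar ∈ Set.Icc (0 : ℝ) 1)
    (htclose : |t - tstar| ≤ ε)
    (w x : EuclideanSpace ℝ (Fin d))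
    (hw : w = tstar • y + (1 - tstar) • z)
    (hx : x = t • y + (1 - t) • z)
    (hroot : ⟪prox w - w, y - z⟫ = 0) :
    |⟪prox x - x, y - z⟫| ≤ 3 * ε * ‖y - z‖ ^ 2 :=
  flag_binary_search_accuracy_general C hCconv L hL h f' hhconv hflip prox hprox y z hy hz ε t tstar
    ht htstar htclose w x hw hx hroot
end

section
/- Let T ≥ 1 be an integer, set ε := 1/(6·d·T³), let y, z ∈ C, and let β ≥ 1 be a real number. Suppose x ∈ C satisfies one of the following three conditions: (a) x = y and ⟨prox(x) − x, x − z⟩ ≥ 0; (b) x = z and ⟨prox(x) − x, y − x⟩ ≤ 0; (c) x = t·y + (1−t)·z for some t ∈ (0,1) and |⟨prox(x) − x, y − z⟩| ≤ 3ε·‖y − z‖₂². Then, with p := −L·(prox(x) − x), one has ⟨p, x − z⟩ ≤ (β − 1)·⟨p, y − x⟩ + D·L·β/T³. -/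
/-!
Write `s = ⟪prox x - x, y - z⟫`. At the endpoints `x = y` and `x = z` the sign condition on the
prox step makes the left side nonpositive and the right side nonnegative. In the interior,
`x - z = t • (y - z)` and `y - x = (1 - t) • (y - z)`, so the claim becomes the scalar inequality
`L s ((β - 1)(1 - t) - t) ≤ D L β / T³`; the coefficient of `s` lies in `[-β, β]`, and the
stopping rule together with `‖y - z‖² ≤ d D` gives `|s| ≤ D / (2 T³)`.
-/

open scoped RealInnerProductSpace

theorem EuclideanSpace.norm_sq_le_card_mul {ι : Type*} [Fintype ι] {v : EuclideanSpace ℝ ι}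
    {D : ℝ} (hv : ∀ i, v i ^ 2 ≤ D) : ‖v‖ ^ 2 ≤ Fintype.card ι * D := by
  rw [EuclideanSpace.real_norm_sq_eq]
  simpa using Finset.sum_le_sum fun i (_ : i ∈ Finset.univ) => hv i

theorem three_mul_one_div_mul_le_div {n u a D : ℝ} (hn : 0 ≤ n) (hu : 0 ≤ u) (hD : 0 ≤ D)
    (ha : a ≤ n * D) : 3 * (1 / (6 * n * u)) * a ≤ D / u :=
  calc 3 * (1 / (6 * n * u)) * a ≤ 3 * (1 / (6 * n * u)) * (n * D) := by gcongr
    _ = n / n * (D / u / 2) := by ring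
    _ ≤ 1 * (D / u / 2) := by gcongr; exact div_self_le_one n
    _ ≤ D / u := by rw [one_mul]; exact half_le_self (by positivity)

section BinarySearch

variable {E : Type*} [NormedAddCommGroup E] [InnerProductSpace ℝ E] {L β r : ℝ} {v x y z : E}

theorem binarySearch_guarantee_of_eq_left (hL : 0 ≤ L) (hr : 0 ≤ r) (hxy : x = y)
    (hv : 0 ≤ ⟪v, x - z⟫) : ⟪-L • v, x - z⟫ ≤ (β - 1) * ⟪-L • v, y - x⟫ + r := by
  rw [hxy, sub_self, inner_zero_right, mul_zero, zero_add, real_inner_smul_left]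
  rw [hxy] at hv
  nlinarith [mul_nonneg hL hv]

theorem binarySearch_guarantee_of_eq_right (hL : 0 ≤ L) (hβ : 1 ≤ β) (hr : 0 ≤ r) (hxz : x = z)
    (hv : ⟪v, y - x⟫ ≤ 0) : ⟪-L • v, x - z⟫ ≤ (β - 1) * ⟪-L • v, y - x⟫ + r := by
  rw [hxz, sub_self, inner_zero_right, real_inner_smul_left]
  rw [hxz] at hv
  nlinarith [mul_nonneg (sub_nonneg.2 hβ) (mul_nonneg hL (neg_nonneg.2 hv))]

theorem binarySearch_guarantee_of_mem_segment {t δ : ℝ} (hL : 0 ≤ L) (hβ : 1 ≤ β) (ht₀ : 0 ≤ t)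
    (ht₁ : t ≤ 1) (hx : x = t • y + (1 - t) • z) (hv : |⟪v, y - z⟫| ≤ δ) :
    ⟪-L • v, x - z⟫ ≤ (β - 1) * ⟪-L • v, y - x⟫ + L * β * δ := by
  have hxz : x - z = t • (y - z) := by rw [hx]; module
  have hyx : y - x = (1 - t) • (y - z) := by rw [hx]; module
  rw [hxz, hyx, real_inner_smul_left, real_inner_smul_left, real_inner_smul_right,
    real_inner_smul_right]
  set s := ⟪v, y - z⟫
  have hc : |(β - 1) * (1 - t) - t| ≤ β := abs_le.2 ⟨by nlinarith, by nlinarith⟩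
  have hsc : s * ((β - 1) * (1 - t) - t) ≤ δ * β := by
    refine (le_abs_self _).trans ?_
    rw [abs_mul]
    exact mul_le_mul hv hc (abs_nonneg _) ((abs_nonneg _).trans hv)
  nlinarith [mul_le_mul_of_nonneg_left hsc hL]

end BinarySearch

theorem flag_binary_search_corollary_general
    {d : ℕ} (C : Set (EuclideanSpace ℝ (Fin d)))
    (L : ℝ) (hL : 0 < L)
    (prox : EuclideanSpace ℝ (Fin d) → EuclideanSpace ℝ (Fin d))
    (D : ℝ) (hD0 : 0 ≤ D)
    (hD : ∀ a ∈ C, ∀ b ∈ C, ∀ i : Fin d, (a i - b i) ^ 2 ≤ D)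
    (T : ℕ)
    (ε : ℝ) (hε : ε = 1 / (6 * (d : ℝ) * (T : ℝ) ^ 3))
    (y z x : EuclideanSpace ℝ (Fin d)) (hy : y ∈ C) (hz : z ∈ C)
    (β : ℝ) (hβ : 1 ≤ β)
    (hcases :
      (x = y ∧ 0 ≤ ⟪prox x - x, x - z⟫) ∨
      (x = z ∧ ⟪prox x - x, y - x⟫ ≤ 0) ∨
      (∃ t : ℝ, t ∈ Set.Ioo (0 : ℝ) 1 ∧ x = t • y + (1 - t) • z ∧
        |⟪prox x - x, y - z⟫| ≤ 3 * ε * ‖y - z‖ ^ 2))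
    (p : EuclideanSpace ℝ (Fin d)) (hp : p = -L • (prox x - x)) :
    ⟪p, x - z⟫ ≤ (β - 1) * ⟪p, y - x⟫ + D * L * β / (T : ℝ) ^ 3 := by
  subst hp
  have hr : 0 ≤ D * L * β / (T : ℝ) ^ 3 := by positivity
  rcases hcases with ⟨hxy, hv⟩ | ⟨hxz, hv⟩ | ⟨t, ⟨ht₀, ht₁⟩, hx, hv⟩
  · exact binarySearch_guarantee_of_eq_left hL.le hr hxy hv
  · exact binarySearch_guarantee_of_eq_right hL.le hβ hr hxz hv
  · have hyz : ‖y - z‖ ^ 2 ≤ d * D := by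
      simpa using EuclideanSpace.norm_sq_le_card_mul fun i => hD y hy z hz i
    have hs : |⟪prox x - x, y - z⟫| ≤ D / (T : ℝ) ^ 3 :=
      hv.trans (hε ▸ three_mul_one_div_mul_le_div d.cast_nonneg (by positivity) hD0 hyz)
    convert binarySearch_guarantee_of_mem_segment hL.le hβ ht₀.le ht₁.le hx hs using 2
    ring

/-- **Corollary 1**: the guarantee for the point returned by the BinarySearch
subroutine, with `β` playing the role of `η_k·L_k ≥ 1`. -/
theorem flag_binary_search_corollary
    {d : ℕ} (hd : 1 ≤ d) (C : Set (EuclideanSpace ℝ (Fin d)))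
    (hCconv : Convex ℝ C) (hCclosed : IsClosed C)
    (L : ℝ) (hL : 0 < L)
    (f h : EuclideanSpace ℝ (Fin d) → ℝ)
    (f' : EuclideanSpace ℝ (Fin d) → EuclideanSpace ℝ (Fin d))
    (hfconv : ConvexOn ℝ Set.univ f) (hhconv : ConvexOn ℝ Set.univ h)
    (hfdiff : ∀ x, HasGradientAt f (f' x) x)
    (hflip : ∀ x ∈ C, ∀ y ∈ C, ‖f' x - f' y‖ ≤ L * ‖x - y‖)
    (prox : EuclideanSpace ℝ (Fin d) → EuclideanSpace ℝ (Fin d))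
    (hprox : ∀ x ∈ C, prox x ∈ C ∧ ∀ w ∈ C,
      h (prox x) + ⟪f' x, prox x - x⟫ + L / 2 * ‖prox x - x‖ ^ 2
        ≤ h w + ⟪f' x, w - x⟫ + L / 2 * ‖w - x‖ ^ 2)
    (D : ℝ) (hD0 : 0 ≤ D)
    (hD : ∀ a ∈ C, ∀ b ∈ C, ∀ i : Fin d, (a i - b i) ^ 2 ≤ D)
    (T : ℕ) (hT : 1 ≤ T)
    (ε : ℝ) (hε : ε = 1 / (6 * (d : ℝ) * (T : ℝ) ^ 3))
    (y z x : EuclideanSpace ℝ (Fin d)) (hy : y ∈ C) (hz : z ∈ C) (hxC : x ∈ C)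
    (β : ℝ) (hβ : 1 ≤ β)
    (hcases :
      (x = y ∧ 0 ≤ ⟪prox x - x, x - z⟫) ∨
      (x = z ∧ ⟪prox x - x, y - x⟫ ≤ 0) ∨
      (∃ t : ℝ, t ∈ Set.Ioo (0 : ℝ) 1 ∧ x = t • y + (1 - t) • z ∧
        |⟪prox x - x, y - z⟫| ≤ 3 * ε * ‖y - z‖ ^ 2))
    (p : EuclideanSpace ℝ (Fin d)) (hp : p = -L • (prox x - x)) :
    ⟪p, x - z⟫ ≤ (β - 1) * ⟪p, y - x⟫ + D * L * β / (T : ℝ) ^ 3 :=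
  flag_binary_search_corollary_general C L hL prox D hD0 hD T ε hε y z x hy hz β hβ hcases p hp
end

section
/- Let p₁, …, p_T ∈ ℝ^d, η₁, …, η_T ∈ ℝ, and let s₁, …, s_T ∈ ℝ^d satisfy 0 < s₁(i) and s_{k−1}(i) ≤ s_k(i) for all coordinates i and all k = 2, …, T; set S_k := diag(s_k). Let z₁ ∈ C and, for k = 1, …, T, let z_{k+1} be the unique minimizer over z ∈ C of ⟨η_k·p_k, z − z_k⟩ + (1/2)·(z − z_k)ᵀ S_k (z − z_k). Then for every u ∈ C: Σ_{k=1}^T ⟨η_k·p_k, z_k − u⟩ ≤ Σ_{k=1}^T (η_k²/2)·p_kᵀ S_k⁻¹ p_k + (D/2)·Σ_{i=1}^d s_T(i). -/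
/-!
Each step of mirror descent is a diagonal proximal step, so the first-order optimality of
`z_{k+1}` against the direction `u - z_{k+1}` gives, after completing a square coordinatewise,
`⟨g_k, z_k - u⟩ ≤ ½‖g_k‖²_{S_k⁻¹} + ½(‖u - z_k‖²_{S_k} - ‖u - z_{k+1}‖²_{S_k})`.
Summing over `k`, the distance terms telescope up to the increments `s_k - s_{k-1} ≥ 0`, each
weighted by a squared coordinate gap of at most `D`; the sum of these is at most `D · s_T`.
-/

open Matrix Filter Topology Finset

section DiagonalMetric

variable {ι : Type*} [Fintype ι] [DecidableEq ι]

noncomputable def diagProxObjective (g S a w : ι → ℝ) : ℝ :=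
  g ⬝ᵥ (w - a) + 1 / 2 * ((w - a) ⬝ᵥ (diagonal S).mulVec (w - a))

lemma dotProduct_diagonal_mulVec_self (S v : ι → ℝ) :
    v ⬝ᵥ (diagonal S).mulVec v = ∑ i, S i * v i ^ 2 := by
  simp only [dotProduct, mulVec_diagonal]
  exact sum_congr rfl fun i _ => by ring

lemma dotProduct_inv_diagonal_mulVec_self {S : ι → ℝ} (hS : ∀ i, S i ≠ 0) (g : ι → ℝ) :
    g ⬝ᵥ (diagonal S)⁻¹.mulVec g = ∑ i, g i ^ 2 / S i := by
  have hinv : (diagonal S)⁻¹ = diagonal S⁻¹ :=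
    inv_eq_left_inv <| by
      rw [diagonal_mul_diagonal, ← diagonal_one]
      exact congrArg diagonal (funext fun i => inv_mul_cancel₀ (hS i))
  simp only [hinv, dotProduct, mulVec_diagonal, Pi.inv_apply]
  exact sum_congr rfl fun i _ => by ring

lemma diagProxObjective_add_smul_sub_sub (g S a b u : ι → ℝ) (t : ℝ) :
    diagProxObjective g S a (b + t • (u - b)) - diagProxObjective g S a b
      = t * ∑ i, (g i + S i * (b i - a i)) * (u i - b i)
        + t ^ 2 * (∑ i, S i * (u i - b i) ^ 2 / 2) := by
  simp only [diagProxObjective, dotProduct_diagonal_mulVec_self]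
  simp only [dotProduct, Pi.add_apply, Pi.sub_apply, Pi.smul_apply, smul_eq_mul, mul_sum,
    ← sum_add_distrib, ← sum_sub_distrib]
  exact sum_congr rfl fun i _ => by ring

lemma nonneg_of_forall_Ioc_mul_add_sq_mul_nonneg {L H : ℝ}
    (h : ∀ t ∈ Set.Ioc (0 : ℝ) 1, 0 ≤ t * L + t ^ 2 * H) : 0 ≤ L := by
  have hlim : Tendsto (fun t : ℝ => L + t * H) (𝓝[>] 0) (𝓝 L) :=
    tendsto_nhdsWithin_of_tendsto_nhds <| by
      simpa using (by fun_prop : Continuous fun t : ℝ => L + t * H).tendsto 0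
  refine ge_of_tendsto hlim ?_
  filter_upwards [Ioc_mem_nhdsGT one_pos] with t ht
  exact nonneg_of_mul_nonneg_right (by linear_combination h t ht) ht.1

lemma diagProx_variational_inequality {C : Set (ι → ℝ)} (hC : Convex ℝ C) {g S a b u : ι → ℝ}
    (hb : b ∈ C) (hu : u ∈ C) (hmin : IsMinOn (diagProxObjective g S a) C b) :
    0 ≤ ∑ i, (g i + S i * (b i - a i)) * (u i - b i) := by
  refine nonneg_of_forall_Ioc_mul_add_sq_mul_nonneg (H := ∑ i, S i * (u i - b i) ^ 2 / 2)
    fun t ht => ?_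
  rw [← diagProxObjective_add_smul_sub_sub, sub_nonneg]
  exact isMinOn_iff.1 hmin _ (hC.add_smul_sub_mem hb hu (Set.Ioc_subset_Icc_self ht))

lemma mul_sub_add_le_sq_div {g S a b u : ℝ} (hS : 0 < S) :
    g * (a - u) + (g + S * (b - a)) * (u - b)
      ≤ (g ^ 2 / S + S * (u - a) ^ 2 - S * (u - b) ^ 2) / 2 := by
  have hsq : (g ^ 2 / S + S * (u - a) ^ 2 - S * (u - b) ^ 2) / 2
      - (g * (a - u) + (g + S * (b - a)) * (u - b)) = (g - S * (a - b)) ^ 2 / (2 * S) := by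
    field_simp
    ring
  have : 0 ≤ (g - S * (a - b)) ^ 2 / (2 * S) := by positivity
  linarith

lemma diagProx_one_step_bound {C : Set (ι → ℝ)} (hC : Convex ℝ C) {g S a b u : ι → ℝ}
    (hS : ∀ i, 0 < S i) (hb : b ∈ C) (hu : u ∈ C)
    (hmin : IsMinOn (diagProxObjective g S a) C b) :
    g ⬝ᵥ (a - u) ≤ (g ⬝ᵥ (diagonal S)⁻¹.mulVec g) / 2
      + ((u - a) ⬝ᵥ (diagonal S).mulVec (u - a) - (u - b) ⬝ᵥ (diagonal S).mulVec (u - b)) / 2 := by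
  have hopt := diagProx_variational_inequality hC hb hu hmin
  calc g ⬝ᵥ (a - u)
      ≤ ∑ i, (g i * (a i - u i) + (g i + S i * (b i - a i)) * (u i - b i)) := by
        simp only [sum_add_distrib, dotProduct, Pi.sub_apply]
        linarith
    _ ≤ ∑ i, (g i ^ 2 / S i + S i * (u i - a i) ^ 2 - S i * (u i - b i) ^ 2) / 2 :=
        sum_le_sum fun i _ => mul_sub_add_le_sq_div (hS i)
    _ = _ := by
        simp only [dotProduct_inv_diagonal_mulVec_self fun i => (hS i).ne',
          dotProduct_diagonal_mulVec_self, ← sum_div, ← add_div, ← sum_sub_distrib,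
          ← sum_add_distrib, Pi.sub_apply]
        exact congrArg (· / 2) (sum_congr rfl fun i _ => by ring)

lemma sum_Icc_mul_sub_le {σ r : ℕ → ℝ} {D : ℝ} {N : ℕ} (hN : 1 ≤ N) (hσ₁ : 0 ≤ σ 1)
    (hσ : MonotoneOn σ (Set.Icc 1 N)) (hr : ∀ k ∈ Icc 1 N, r k ≤ D) :
    ∑ k ∈ Icc 1 N, σ k * (r k - r (k + 1)) ≤ σ N * (D - r (N + 1)) := by
  induction N, hN using Nat.le_induction with
  | base =>
    simp only [Icc_self, sum_singleton]
    nlinarith [hr 1 (by simp)]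
  | succ n hn ih =>
    have hσn : σ n ≤ σ (n + 1) := hσ ⟨hn, by omega⟩ ⟨by omega, le_rfl⟩ (by omega)
    have hrn : r (n + 1) ≤ D := hr (n + 1) (right_mem_Icc.2 (by omega))
    have ih := ih (hσ.mono (Set.Icc_subset_Icc_right (by omega)))
      fun k hk => hr k (Icc_subset_Icc_right (by omega) hk)
    rw [sum_Icc_succ_top (by omega)]
    nlinarith

lemma sum_Icc_diagonal_telescope_le {s v : ℕ → ι → ℝ} {D : ℝ} {T : ℕ} (hT : 1 ≤ T)
    (hs₁ : ∀ i, 0 ≤ s 1 i) (hs : ∀ i, MonotoneOn (fun k => s k i) (Set.Icc 1 T))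
    (hv : ∀ k ∈ Icc 1 T, ∀ i, v k i ^ 2 ≤ D) :
    ∑ k ∈ Icc 1 T, (v k ⬝ᵥ (diagonal (s k)).mulVec (v k)
        - v (k + 1) ⬝ᵥ (diagonal (s k)).mulVec (v (k + 1))) ≤ D * ∑ i, s T i := by
  simp only [dotProduct_diagonal_mulVec_self, ← sum_sub_distrib, ← mul_sub]
  rw [sum_comm, mul_sum]
  refine sum_le_sum fun i _ => ?_
  have hsT : 0 ≤ s T i := (hs₁ i).trans (hs i ⟨le_rfl, hT⟩ ⟨hT, le_rfl⟩ hT)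
  have := sum_Icc_mul_sub_le (r := fun k => v k i ^ 2) hT (hs₁ i) (hs i) fun k hk => hv k hk i
  nlinarith [sq_nonneg (v (T + 1) i)]

end DiagonalMetric

theorem flag_mirror_descent_general
    {d : ℕ} (C : Set (Fin d → ℝ)) (hCconv : Convex ℝ C)
    (D : ℝ)
    (hD : ∀ a ∈ C, ∀ b ∈ C, ∀ i : Fin d, (a i - b i) ^ 2 ≤ D)
    (T : ℕ) (hT : 1 ≤ T)
    (p : ℕ → Fin d → ℝ) (η : ℕ → ℝ) (s : ℕ → Fin d → ℝ)
    (hs_pos : ∀ i, 0 < s 1 i)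
    (hs_mono : ∀ k, 2 ≤ k → k ≤ T → ∀ i, s (k - 1) i ≤ s k i)
    (z : ℕ → Fin d → ℝ) (hz1 : z 1 ∈ C)
    (hstep : ∀ k, 1 ≤ k → k ≤ T → z (k + 1) ∈ C ∧ ∀ w ∈ C,
      (η k • p k) ⬝ᵥ (z (k + 1) - z k)
          + 1 / 2 * ((z (k + 1) - z k) ⬝ᵥ (Matrix.diagonal (s k)).mulVec (z (k + 1) - z k))
        ≤ (η k • p k) ⬝ᵥ (w - z k)
          + 1 / 2 * ((w - z k) ⬝ᵥ (Matrix.diagonal (s k)).mulVec (w - z k)))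
    (u : Fin d → ℝ) (hu : u ∈ C) :
    ∑ k ∈ Finset.Icc 1 T, (η k • p k) ⬝ᵥ (z k - u)
      ≤ (∑ k ∈ Finset.Icc 1 T,
            η k ^ 2 / 2 * (p k ⬝ᵥ (Matrix.diagonal (s k))⁻¹.mulVec (p k)))
        + D / 2 * ∑ i : Fin d, s T i := by
  have hmono : ∀ i, MonotoneOn (fun k => s k i) (Set.Icc 1 T) := fun i =>
    monotoneOn_of_le_add_one Set.ordConnected_Icc fun k _ hk hk1 => by
      simpa using hs_mono (k + 1) (Nat.succ_le_succ hk.1) hk1.2 i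
  have hpos : ∀ k ∈ Icc 1 T, ∀ i, 0 < s k i := fun k hk i =>
    (hs_pos i).trans_le (hmono i ⟨le_rfl, hT⟩ (mem_Icc.1 hk) (mem_Icc.1 hk).1)
  have hzC : ∀ k ∈ Icc 1 T, z k ∈ C := by
    rintro (_ | _ | k) hk
    · simp at hk
    · exact hz1
    · exact (hstep (k + 1) (by omega) (by simp at hk; omega)).1
  have hsteps := fun k hk =>
    diagProx_one_step_bound (g := η k • p k) (a := z k) hCconv (hpos k hk) (hstep k (mem_Icc.1 hk).1 (mem_Icc.1 hk).2).1 hu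
    (isMinOn_iff.2 (hstep k (mem_Icc.1 hk).1 (mem_Icc.1 hk).2).2)
  have htel := sum_Icc_diagonal_telescope_le (v := fun k => u - z k) hT (fun i => (hs_pos i).le)
    hmono fun k hk i => hD u hu (z k) (hzC k hk) i
  calc ∑ k ∈ Icc 1 T, (η k • p k) ⬝ᵥ (z k - u)
      ≤ ∑ k ∈ Icc 1 T, ((η k • p k) ⬝ᵥ (diagonal (s k))⁻¹.mulVec (η k • p k) / 2
          + ((u - z k) ⬝ᵥ (diagonal (s k)).mulVec (u - z k)
            - (u - z (k + 1)) ⬝ᵥ (diagonal (s k)).mulVec (u - z (k + 1))) / 2) :=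
        sum_le_sum hsteps
    _ ≤ _ := by
        rw [sum_add_distrib]
        refine add_le_add (sum_congr rfl fun k _ => ?_).le ?_
        · simp only [mulVec_smul, smul_dotProduct, dotProduct_smul, smul_eq_mul]
          ring
        · rw [← sum_div]
          linarith

/-- **Mirror Descent Inequality** (Lemma 4), with `S_k = diag(s_k)` diagonal
positive definite with coordinatewise nondecreasing diagonals. -/
theorem flag_mirror_descent
    {d : ℕ} (C : Set (Fin d → ℝ)) (hCconv : Convex ℝ C) (hCclosed : IsClosed C)
    (D : ℝ) (hD0 : 0 ≤ D)
    (hD : ∀ a ∈ C, ∀ b ∈ C, ∀ i : Fin d, (a i - b i) ^ 2 ≤ D)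
    (T : ℕ) (hT : 1 ≤ T)
    (p : ℕ → Fin d → ℝ) (η : ℕ → ℝ) (s : ℕ → Fin d → ℝ)
    (hs_pos : ∀ i, 0 < s 1 i)
    (hs_mono : ∀ k, 2 ≤ k → k ≤ T → ∀ i, s (k - 1) i ≤ s k i)
    (z : ℕ → Fin d → ℝ) (hz1 : z 1 ∈ C)
    (hstep : ∀ k, 1 ≤ k → k ≤ T → z (k + 1) ∈ C ∧ ∀ w ∈ C,
      (η k • p k) ⬝ᵥ (z (k + 1) - z k)
          + 1 / 2 * ((z (k + 1) - z k) ⬝ᵥ (Matrix.diagonal (s k)).mulVec (z (k + 1) - z k))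
        ≤ (η k • p k) ⬝ᵥ (w - z k)
          + 1 / 2 * ((w - z k) ⬝ᵥ (Matrix.diagonal (s k)).mulVec (w - z k)))
    (u : Fin d → ℝ) (hu : u ∈ C) :
    ∑ k ∈ Finset.Icc 1 T, (η k • p k) ⬝ᵥ (z k - u)
      ≤ (∑ k ∈ Finset.Icc 1 T,
            η k ^ 2 / 2 * (p k ⬝ᵥ (Matrix.diagonal (s k))⁻¹.mulVec (p k)))
        + D / 2 * ∑ i : Fin d, s T i :=
  flag_mirror_descent_general C hCconv D hD T hT p η s hs_pos hs_mono z hz1 hstep u hu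
end

section
/- Let a₁, …, a_T be real numbers and set b_k := √(a₁² + ⋯ + a_k²) for k = 1, …, T. Then Σ_{k=1}^T c_k ≤ 2·b_T, where c_k := a_k²/b_k when b_k > 0 and c_k := 0 when b_k = 0. -/
/-!
Since `a_k² = b_k² - b_{k-1}²` and `b_{k-1} ≤ b_k`, each term satisfies
`a_k² / b_k = (b_k - b_{k-1}) (b_k + b_{k-1}) / b_k ≤ 2 (b_k - b_{k-1})`,
and the right-hand sides telescope to `2 (b_T - b_0) = 2 b_T`.
-/

open Finset

lemma sq_sub_sq_div_le_two_mul_sub {x y : ℝ} (hx : 0 ≤ x) (hxy : x ≤ y) :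
    (y ^ 2 - x ^ 2) / y ≤ 2 * (y - x) := by
  rcases hxy.lt_or_eq with hlt | rfl
  · have hy : 0 < y := hx.trans_lt hlt
    rw [div_le_iff₀ hy]
    nlinarith
  · simp

lemma sum_Icc_sq_sub_sq_div_le {b : ℕ → ℝ} (hb0 : 0 ≤ b 0) (hb : Monotone b) (T : ℕ) :
    ∑ k ∈ Icc 1 T, (b k ^ 2 - b (k - 1) ^ 2) / b k ≤ 2 * (b T - b 0) := by
  induction T with
  | zero => simp
  | succ T ih =>
    rw [sum_Icc_succ_top (Nat.le_add_left 1 T), Nat.add_sub_cancel]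
    have hstep := sq_sub_sq_div_le_two_mul_sub (hb0.trans (hb T.zero_le)) (hb T.le_succ)
    linarith

lemma sq_eq_sub_sum_Icc_pred (a : ℕ → ℝ) {k : ℕ} (hk : 1 ≤ k) :
    a k ^ 2 = ∑ j ∈ Icc 1 k, a j ^ 2 - ∑ j ∈ Icc 1 (k - 1), a j ^ 2 := by
  obtain ⟨k, rfl⟩ := Nat.exists_eq_add_of_le' hk
  rw [sum_Icc_succ_top hk, Nat.add_sub_cancel]
  ring

/-- The scalar AdaGrad inequality (from Lemma 4 of Duchi–Hazan–Singer):
with `b_k = √(a₁² + ⋯ + a_k²)`, `∑_{k=1}^T a_k²/b_k ≤ 2 b_T`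
(with the convention `a_k²/b_k := 0` when `b_k = 0`). -/
theorem adagrad_scalar_inequality
    (T : ℕ) (a : ℕ → ℝ) (b : ℕ → ℝ)
    (hb : ∀ k, b k = Real.sqrt (∑ j ∈ Finset.Icc 1 k, a j ^ 2)) :
    ∑ k ∈ Finset.Icc 1 T, (if b k = 0 then 0 else a k ^ 2 / b k) ≤ 2 * b T := by
  have hsum_nonneg : ∀ k, 0 ≤ ∑ j ∈ Icc 1 k, a j ^ 2 := fun k =>
    sum_nonneg fun j _ => sq_nonneg (a j)
  have hb_sq : ∀ k, b k ^ 2 = ∑ j ∈ Icc 1 k, a j ^ 2 := fun k => by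
    rw [hb k, Real.sq_sqrt (hsum_nonneg k)]
  have hb_mono : Monotone b := fun i j hij => by
    rw [hb i, hb j]
    exact Real.sqrt_le_sqrt <| sum_le_sum_of_subset_of_nonneg (Icc_subset_Icc_right hij)
      fun k _ _ => sq_nonneg (a k)
  have hb_zero : b 0 = 0 := by simp [hb 0]
  calc ∑ k ∈ Icc 1 T, (if b k = 0 then 0 else a k ^ 2 / b k)
      = ∑ k ∈ Icc 1 T, (b k ^ 2 - b (k - 1) ^ 2) / b k := by
        refine sum_congr rfl fun k hk => ?_
        rw [hb_sq, hb_sq, ← sq_eq_sub_sum_Icc_pred a (mem_Icc.mp hk).1]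
        -- the convention `c_k = 0` at `b_k = 0` is exactly Lean's `x / 0 = 0`
        split_ifs with h <;> simp [h]
    _ ≤ 2 * (b T - b 0) := sum_Icc_sq_sub_sq_div_le hb_zero.ge hb_mono T
    _ = 2 * b T := by rw [hb_zero, sub_zero]
end

section
/- Let g₁, …, g_T ∈ ℝ^d, let δ > 0, and define s_k(i) := √(Σ_{j=1}^k g_j(i)²) for k = 1, …, T and i = 1, …, d, and q_T := Σ_{i=1}^d s_T(i). Then Σ_{k=1}^T Σ_{i=1}^d g_k(i)²/(s_k(i) + δ) ≤ 2·q_T. Equivalently, with S_k := diag(s_k) + δI, Σ_{k=1}^T g_kᵀ S_k⁻¹ g_k ≤ 2·q_T. -/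
open Finset Real

/-- Discrete form of `∫ dt / √t = 2√t`: `y = (√(x+y) - √x)(√(x+y) + √x)` and the second factor
is at most `2 (√(x+y) + δ)`. -/
theorem div_sqrt_add_add_le_two_mul_sqrt_sub {x y δ : ℝ} (hx : 0 ≤ x) (hy : 0 ≤ y)
    (hδ : 0 ≤ δ) : y / (√(x + y) + δ) ≤ 2 * (√(x + y) - √x) := by
  have hr := sqrt_nonneg x
  have hrs : √x ≤ √(x + y) := sqrt_le_sqrt (by linarith)
  have hy_eq : y = √(x + y) ^ 2 - √x ^ 2 := by
    rw [sq_sqrt hx, sq_sqrt (by linarith)]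
    ring
  refine div_le_of_le_mul₀ (by positivity) (by linarith) ?_
  nlinarith

theorem sum_sq_div_sqrt_sum_sq_add_le (a : ℕ → ℝ) {δ : ℝ} (hδ : 0 ≤ δ) (n : ℕ) :
    ∑ k ∈ Icc 1 n, a k ^ 2 / (√(∑ j ∈ Icc 1 k, a j ^ 2) + δ)
      ≤ 2 * √(∑ j ∈ Icc 1 n, a j ^ 2) := by
  induction n with
  | zero => simp
  | succ n ih =>
    rw [sum_Icc_succ_top (by omega), sum_Icc_succ_top (by omega)]
    have hstep := div_sqrt_add_add_le_two_mul_sqrt_sub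
      (sum_nonneg fun j (_ : j ∈ Icc 1 n) => sq_nonneg (a j)) (sq_nonneg (a (n + 1))) hδ
    linarith

/-- **AdaGrad Inequalities** (Lemma 5, part (i)): with
`s_k(i) = √(∑_{j=1}^k g_j(i)²)` and `q_T = ∑_i s_T(i)`, one has
`∑_{k=1}^T ∑_i g_k(i)²/(s_k(i) + δ) ≤ 2 q_T`, i.e.
`∑_{k=1}^T g_kᵀ S_k⁻¹ g_k ≤ 2 q_T` for `S_k = diag(s_k) + δ I`. -/
theorem adagrad_inequality_i
    (T d : ℕ) (g : ℕ → Fin d → ℝ) (δ : ℝ) (hδ : 0 < δ)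
    (s : ℕ → Fin d → ℝ)
    (hs : ∀ k, ∀ i, s k i = Real.sqrt (∑ j ∈ Finset.Icc 1 k, g j i ^ 2))
    (q : ℝ) (hq : q = ∑ i : Fin d, s T i) :
    ∑ k ∈ Finset.Icc 1 T, ∑ i : Fin d, g k i ^ 2 / (s k i + δ) ≤ 2 * q := by
  rw [sum_comm, hq, mul_sum]
  refine sum_le_sum fun i _ => ?_
  simp only [hs]
  exact sum_sq_div_sqrt_sum_sq_add_le (g · i) hδ.le T
end

section
/- Let g₁, …, g_T ∈ ℝ^d and define q_T := Σ_{i=1}^d √(Σ_{k=1}^T g_k(i)²). For every s ∈ ℝ^d with s(i) > 0 for all i and Σ_{i=1}^d s(i) ≤ 1, one has Σ_{k=1}^T Σ_{i=1}^d g_k(i)²/s(i) ≥ q_T². Moreover, if for every coordinate i there exists k with g_k(i) ≠ 0 (so q_T > 0 and each √(Σ_k g_k(i)²) > 0), then the choice s(i) := √(Σ_{k=1}^T g_k(i)²)/q_T is admissible and attains equality, i.e., q_T² = min over all such s of Σ_{k=1}^T Σ_{i=1}^d g_k(i)²/s(i). -/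
/-!
Cauchy–Schwarz with the factors `√(a i / s i)` and `√(s i)`, where `a i = ∑_k g_k(i)²`, gives
`q² = (∑ √(a i))² ≤ (∑ a i / s i) · ∑ s i ≤ ∑ a i / s i`. For `s i = √(a i) / q` each term
`a i / s i` collapses to `q · √(a i)`, so the bound is attained.
-/

open Finset

theorem sq_sum_sqrt_le_sum_div {ι : Type*} {s : Finset ι} {a w : ι → ℝ}
    (ha : ∀ i ∈ s, 0 ≤ a i) (hw : ∀ i ∈ s, 0 < w i) (hw_sum : ∑ i ∈ s, w i ≤ 1) :
    (∑ i ∈ s, √(a i)) ^ 2 ≤ ∑ i ∈ s, a i / w i := by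
  have hterm : ∀ i ∈ s, √(a i) ^ 2 ≤ a i / w i * w i := fun i hi => by
    rw [Real.sq_sqrt (ha i hi), div_mul_cancel₀ _ (hw i hi).ne']
  calc (∑ i ∈ s, √(a i)) ^ 2
      ≤ (∑ i ∈ s, a i / w i) * ∑ i ∈ s, w i :=
        sum_sq_le_sum_mul_sum_of_sq_le_mul s (fun i hi => div_nonneg (ha i hi) (hw i hi).le)
          (fun i hi => (hw i hi).le) hterm
    _ ≤ ∑ i ∈ s, a i / w i :=
        mul_le_of_le_one_right (sum_nonneg fun i hi => div_nonneg (ha i hi) (hw i hi).le) hw_sum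

theorem sum_div_sqrt_div {ι : Type*} (s : Finset ι) (a : ι → ℝ) (c : ℝ) :
    ∑ i ∈ s, a i / (√(a i) / c) = (∑ i ∈ s, √(a i)) * c := by
  rw [sum_mul]
  refine sum_congr rfl fun i _ => ?_
  rw [div_div_eq_mul_div, mul_div_right_comm, Real.div_sqrt]

/-- **AdaGrad Inequalities** (Lemma 5, part (ii)): with
`q_T = ∑_i √(∑_{k=1}^T g_k(i)²)`, every positive `s` with `∑_i s(i) ≤ 1`
satisfies `∑_{k=1}^T ∑_i g_k(i)²/s(i) ≥ q_T²`; and under nondegeneracy the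
choice `s(i) = √(∑_k g_k(i)²)/q_T` is admissible and attains equality, so
`q_T² = min_{S ∈ 𝒮} ∑_k g_kᵀ S⁻¹ g_k`. -/
theorem adagrad_inequality_ii
    (T d : ℕ) (g : ℕ → Fin d → ℝ)
    (q : ℝ) (hq : q = ∑ i : Fin d, Real.sqrt (∑ k ∈ Finset.Icc 1 T, g k i ^ 2)) :
    (∀ s : Fin d → ℝ, (∀ i, 0 < s i) → (∑ i : Fin d, s i) ≤ 1 →
      q ^ 2 ≤ ∑ k ∈ Finset.Icc 1 T, ∑ i : Fin d, g k i ^ 2 / s i) ∧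
    ((∀ i : Fin d, ∃ k ∈ Finset.Icc 1 T, g k i ≠ 0) →
      ∃ s : Fin d → ℝ,
        (∀ i, s i = Real.sqrt (∑ k ∈ Finset.Icc 1 T, g k i ^ 2) / q) ∧
        (∀ i, 0 < s i) ∧ (∑ i : Fin d, s i) ≤ 1 ∧
        ∑ k ∈ Finset.Icc 1 T, ∑ i : Fin d, g k i ^ 2 / s i = q ^ 2) := by
  set a : Fin d → ℝ := fun i => ∑ k ∈ Icc 1 T, g k i ^ 2
  have hswap (s : Fin d → ℝ) :
      ∑ k ∈ Icc 1 T, ∑ i, g k i ^ 2 / s i = ∑ i, a i / s i := by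
    rw [sum_comm]
    simp only [a, sum_div]
  refine ⟨fun s hs hs_sum => ?_, fun hnd => ⟨fun i => √(a i) / q, fun _ => rfl, ?_, ?_, ?_⟩⟩
  · rw [hswap, hq]
    exact sq_sum_sqrt_le_sum_div (fun i _ => sum_nonneg fun k _ => sq_nonneg _)
      (fun i _ => hs i) hs_sum
  · intro i
    obtain ⟨k, hk, hgk⟩ := hnd i
    have ha_pos : 0 < √(a i) :=
      Real.sqrt_pos.mpr (sum_pos' (fun j _ => sq_nonneg _) ⟨k, hk, by positivity⟩)
    have hq_pos : 0 < q :=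
      ha_pos.trans_le (hq ▸ single_le_sum (fun j _ => Real.sqrt_nonneg _) (mem_univ i))
    exact div_pos ha_pos hq_pos
  · rw [← sum_div, ← hq]
    exact div_self_le_one q
  · rw [hswap, sum_div_sqrt_div, ← hq, sq]
end

section
/- Let L₁, …, L_T be positive reals and define η₁ := 1/L₁ and, for k = 2, …, T, η_k := 1/(2L_k) + √(1/(4L_k²) + η_{k−1}²·L_{k−1}/L_k). Then Σ_{k=1}^T η_k ≥ T³/(1000·Σ_{k=1}^T L_k). -/
/-!
Write `S k = η 1 + ⋯ + η k`. Each `η k` is the positive root of `L k x² = x + η (k-1)² L (k-1)`,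
so by induction `η k ² L k = S k`. Then `S k - S (k-1) = η k = √(S k) / √(L k)`, and factoring the
difference of squares gives `√(S k) - √(S (k-1)) ≥ 1 / (2 √(L k))`. Telescoping,
`S T ≥ (∑ 1/√(L k))² / 4`, and two Cauchy–Schwarz steps give `T³ ≤ (∑ L k) (∑ 1/√(L k))²`.
-/

open Finset

lemma quadratic_root_pos {L c x : ℝ} (hL : 0 < L)
    (hx : x = 1 / (2 * L) + √(1 / (4 * L ^ 2) + c / L)) : 0 < x := by
  rw [hx]
  positivity

lemma quadratic_root_sq_mul {L c x : ℝ} (hL : 0 < L) (hc : 0 ≤ c)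
    (hx : x = 1 / (2 * L) + √(1 / (4 * L ^ 2) + c / L)) : x ^ 2 * L = x + c := by
  have hroot : (x - 1 / (2 * L)) ^ 2 = 1 / (4 * L ^ 2) + c / L := by
    rw [hx, add_sub_cancel_left, Real.sq_sqrt (by positivity)]
  field_simp at hroot
  nlinarith

lemma inv_two_mul_sqrt_le_sqrt_add_sub_sqrt {s x L : ℝ} (hs : 0 ≤ s) (hx : 0 < x) (hL : 0 < L)
    (h : x ^ 2 * L = s + x) : 1 / (2 * √L) ≤ √(s + x) - √s := by
  have hsqrt : √(s + x) = x * √L := by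
    rw [← h, Real.sqrt_mul (sq_nonneg x), Real.sqrt_sq hx.le]
  have hle : √s ≤ √(s + x) := Real.sqrt_le_sqrt (by linarith)
  have key : x * 1 ≤ x * (2 * √L * (√(s + x) - √s)) :=
    calc x * 1 = (√(s + x) - √s) * (√(s + x) + √s) := by
          rw [mul_one, mul_comm, ← sq_sub_sq, Real.sq_sqrt (by positivity), Real.sq_sqrt hs]
          ring
      _ ≤ (√(s + x) - √s) * (2 * √(s + x)) :=
          mul_le_mul_of_nonneg_left (by linarith) (sub_nonneg.mpr hle)
      _ = x * (2 * √L * (√(s + x) - √s)) := by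
          rw [hsqrt]
          ring
  rw [div_le_iff₀ (by positivity)]
  linarith [le_of_mul_le_mul_left key hx]

lemma card_pow_three_le_sum_mul_sq_sum_inv_sqrt {ι : Type*} (s : Finset ι) {a : ι → ℝ}
    (ha : ∀ i ∈ s, 0 < a i) :
    (#s : ℝ) ^ 3 ≤ (∑ i ∈ s, a i) * (∑ i ∈ s, 1 / √(a i)) ^ 2 := by
  obtain rfl | hne := s.eq_empty_or_nonempty
  · simp
  set A := ∑ i ∈ s, √(a i)
  set B := ∑ i ∈ s, 1 / √(a i)
  have hA : 0 < A := sum_pos (fun i hi => Real.sqrt_pos.mpr (ha i hi)) hne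
  have hcard : (0 : ℝ) < #s := by exact_mod_cast hne.card_pos
  have hAB : (#s : ℝ) ^ 2 ≤ A * B := by
    have := sq_sum_div_le_sum_sq_div s (fun _ => (1 : ℝ)) (fun i hi => Real.sqrt_pos.mpr (ha i hi))
    simp only [sum_const, nsmul_eq_mul, mul_one, one_pow] at this
    rwa [div_le_iff₀ hA, mul_comm] at this
  have hA2 : A ^ 2 ≤ #s * ∑ i ∈ s, a i := by
    have := sq_sum_le_card_mul_sum_sq (s := s) (f := fun i => √(a i))
    rwa [sum_congr rfl fun i hi => Real.sq_sqrt (ha i hi).le] at this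
  have h4 : (#s : ℝ) * #s ^ 3 ≤ #s * ((∑ i ∈ s, a i) * B ^ 2) :=
    calc (#s : ℝ) * #s ^ 3 = ((#s : ℝ) ^ 2) ^ 2 := by ring
      _ ≤ (A * B) ^ 2 := pow_le_pow_left₀ (by positivity) hAB 2
      _ = A ^ 2 * B ^ 2 := by ring
      _ ≤ (#s * ∑ i ∈ s, a i) * B ^ 2 := by gcongr
      _ = #s * ((∑ i ∈ s, a i) * B ^ 2) := by ring
  exact le_of_mul_le_mul_left h4 hcard

structure FlagStepsizes (T : ℕ) (L η : ℕ → ℝ) : Prop where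
  lipschitz_pos : ∀ k, 1 ≤ k → k ≤ T → 0 < L k
  first : η 1 = 1 / L 1
  succ : ∀ k, 2 ≤ k → k ≤ T →
    η k = 1 / (2 * L k) + √(1 / (4 * L k ^ 2) + η (k - 1) ^ 2 * L (k - 1) / L k)

namespace FlagStepsizes

variable {T : ℕ} {L η : ℕ → ℝ}

lemma stepsize_pos (h : FlagStepsizes T L η) {k : ℕ} (hk : 1 ≤ k) (hkT : k ≤ T) : 0 < η k := by
  obtain rfl | h2 := hk.eq_or_lt
  · rw [h.first]
    exact one_div_pos.mpr (h.lipschitz_pos 1 le_rfl hkT)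
  · exact quadratic_root_pos (h.lipschitz_pos k hk hkT) (h.succ k h2 hkT)

lemma sum_nonneg_of_le (h : FlagStepsizes T L η) {k : ℕ} (hkT : k ≤ T) :
    0 ≤ ∑ j ∈ Icc 1 k, η j :=
  sum_nonneg fun _ hj => (h.stepsize_pos (mem_Icc.mp hj).1 ((mem_Icc.mp hj).2.trans hkT)).le

lemma sq_mul_eq_sum (h : FlagStepsizes T L η) {k : ℕ} (hk : 1 ≤ k) (hkT : k ≤ T) :
    η k ^ 2 * L k = ∑ j ∈ Icc 1 k, η j := by
  induction k, hk using Nat.le_induction with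
  | base =>
    have hL1 := h.lipschitz_pos 1 le_rfl hkT
    rw [Icc_self, sum_singleton, h.first]
    field_simp
  | succ n hn ih =>
    have hroot := h.succ (n + 1) (by omega) hkT
    rw [Nat.add_sub_cancel] at hroot
    have hc : 0 ≤ η n ^ 2 * L n := mul_nonneg (sq_nonneg _) (h.lipschitz_pos n hn (by omega)).le
    rw [quadratic_root_sq_mul (h.lipschitz_pos (n + 1) (by omega) hkT) hc hroot, ih (by omega),
      sum_Icc_succ_top (by omega), add_comm]

lemma half_sum_inv_sqrt_le_sqrt_sum (h : FlagStepsizes T L η) {k : ℕ} (hkT : k ≤ T) :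
    (∑ j ∈ Icc 1 k, 1 / √(L j)) / 2 ≤ √(∑ j ∈ Icc 1 k, η j) := by
  induction k with
  | zero => simp
  | succ n ih =>
    have hstep := inv_two_mul_sqrt_le_sqrt_add_sub_sqrt (h.sum_nonneg_of_le (k := n) (by omega))
      (h.stepsize_pos (by omega) hkT) (h.lipschitz_pos (n + 1) (by omega) hkT)
      (by rw [h.sq_mul_eq_sum (by omega) hkT, sum_Icc_succ_top (by omega)])
    have hhalf : 1 / √(L (n + 1)) / 2 = 1 / (2 * √(L (n + 1))) := by ring
    rw [sum_Icc_succ_top (by omega), sum_Icc_succ_top (by omega), add_div, hhalf]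
    linarith [ih (by omega)]

lemma sq_sum_inv_sqrt_div_four_le_sum (h : FlagStepsizes T L η) :
    (∑ k ∈ Icc 1 T, 1 / √(L k)) ^ 2 / 4 ≤ ∑ k ∈ Icc 1 T, η k := by
  have := (Real.le_sqrt (by positivity) (h.sum_nonneg_of_le le_rfl)).mp
    (h.half_sum_inv_sqrt_le_sqrt_sum le_rfl)
  linarith [div_pow (∑ k ∈ Icc 1 T, 1 / √(L k)) 2 2]

end FlagStepsizes

theorem flag_stepsize_sum_lower_bound_general
    (T : ℕ) (L η : ℕ → ℝ)
    (hL : ∀ k, 1 ≤ k → k ≤ T → 0 < L k)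
    (hη1 : η 1 = 1 / L 1)
    (hηk : ∀ k, 2 ≤ k → k ≤ T →
      η k = 1 / (2 * L k)
        + Real.sqrt (1 / (4 * L k ^ 2) + η (k - 1) ^ 2 * L (k - 1) / L k)) :
    (T : ℝ) ^ 3 / (1000 * ∑ k ∈ Finset.Icc 1 T, L k)
      ≤ ∑ k ∈ Finset.Icc 1 T, η k := by
  have hLpos : ∀ k ∈ Icc 1 T, 0 < L k := fun k hk => hL k (mem_Icc.mp hk).1 (mem_Icc.mp hk).2
  have hholder := card_pow_three_le_sum_mul_sq_sum_inv_sqrt (Icc 1 T) hLpos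
  rw [Nat.card_Icc, Nat.add_sub_cancel] at hholder
  have hsum := FlagStepsizes.sq_sum_inv_sqrt_div_four_le_sum ⟨hL, hη1, hηk⟩
  have hΛ : 0 ≤ ∑ k ∈ Icc 1 T, L k := sum_nonneg fun k hk => (hLpos k hk).le
  refine div_le_of_le_mul₀ (by positivity) (hsum.trans' (by positivity)) ?_
  nlinarith [mul_nonneg hΛ (sq_nonneg (∑ k ∈ Icc 1 T, 1 / √(L k)))]

/-- Stepsize-sum lower bound (Lemma 7):
`∑_{k=1}^T η_k ≥ T³ / (1000 ∑_{k=1}^T L_k)`. -/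
theorem flag_stepsize_sum_lower_bound
    (T : ℕ) (hT : 1 ≤ T) (L η : ℕ → ℝ)
    (hL : ∀ k, 1 ≤ k → k ≤ T → 0 < L k)
    (hη1 : η 1 = 1 / L 1)
    (hηk : ∀ k, 2 ≤ k → k ≤ T →
      η k = 1 / (2 * L k)
        + Real.sqrt (1 / (4 * L k ^ 2) + η (k - 1) ^ 2 * L (k - 1) / L k)) :
    (T : ℝ) ^ 3 / (1000 * ∑ k ∈ Finset.Icc 1 T, L k)
      ≤ ∑ k ∈ Finset.Icc 1 T, η k :=
  flag_stepsize_sum_lower_bound_general T L η hL hη1 hηk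
end
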